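/- With q(λ) = Σ_{i=m}^{n} (−1)^{n−i} (s_{n−i}/s_{n−m}) λ^{i} and g_m > 0, every nonzero complex root ν of q satisfies |ν| ≥ 1/(2g_m); in particular 0 is the only root of q in the open ball B(0, 1/(2g_m)). -/

import Mathlib

open Finset

/-- The `k`-th elementary symmetric function of the values `σ i`, `i : Fin n`
(with the convention `esym σ 0 = 1`). -/
noncomputable def esym {n : ℕ} (σ : Fin n → ℝ) (k : ℕ) : ℝ :=
  ∑ t ∈ Finset.univ.powersetCard k, ∏ i ∈ t, σ i

/-- `g_m = max_{m+1 ≤ i ≤ n} (s_{n-i}/s_{n-m})^{1/(i-m)}`, with the convention `g_n = 1`. -/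
noncomputable def gQ (n : ℕ) (σ : Fin n → ℝ) (m : ℕ) : ℝ :=
  if m = n then 1 else
    sSup ((fun i : ℕ => (esym σ (n - i) / esym σ (n - m)) ^ ((1 : ℝ) / ((i : ℝ) - (m : ℝ)))) ''
      (Set.Icc (m + 1) n))

/-- The polynomial `q(λ) = Σ_{i=m}^{n} (−1)^{n−i} (s_{n−i}/s_{n−m}) λ^{i}`. -/
noncomputable def qPoly (n : ℕ) (σ : Fin n → ℝ) (m : ℕ) (lam : ℂ) : ℂ :=
  ∑ i ∈ Finset.Icc m n,
    (-1 : ℂ) ^ (n - i) * ((esym σ (n - i) / esym σ (n - m) : ℝ) : ℂ) * lam ^ i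

/-! Dividing `q(ν)` by `ν^m` leaves a polynomial `Σ_k c_k ν^k` with `|c_0| = 1`
and `|c_k| ≤ g_m^k`, by the definition of `g_m`. If `t = g_m |ν| < 1/2`, then
`|Σ_{k ≥ 1} c_k ν^k| ≤ Σ_{k ≥ 1} t^k ≤ t / (1 - t) < 1 = |c_0|`, so `ν` is not a root. -/

theorem one_div_two_mul_le_norm_of_sum_eq_zero {𝕜 : Type*} [NormedDivisionRing 𝕜]
    {d : ℕ} (c : ℕ → 𝕜) {g : ℝ} (hg : 0 < g) (hc₀ : ‖c 0‖ = 1)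
    (hc : ∀ k ∈ Ico 1 (d + 1), ‖c k‖ ≤ g ^ k) {z : 𝕜}
    (hz : ∑ k ∈ range (d + 1), c k * z ^ k = 0) :
    1 / (2 * g) ≤ ‖z‖ := by
  by_contra! hlt
  set t := g * ‖z‖
  have ht : t < 1 / 2 := by
    calc t < g * (1 / (2 * g)) := mul_lt_mul_of_pos_left hlt hg
      _ = 1 / 2 := by field_simp
  have htail : c 0 = -∑ k ∈ Ico 1 (d + 1), c k * z ^ k := by
    rw [sum_range_eq_add_Ico _ d.succ_pos, pow_zero, mul_one] at hz
    exact eq_neg_of_add_eq_zero_left hz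
  have hbound : ‖∑ k ∈ Ico 1 (d + 1), c k * z ^ k‖ ≤ t / (1 - t) :=
    calc ‖∑ k ∈ Ico 1 (d + 1), c k * z ^ k‖
        ≤ ∑ k ∈ Ico 1 (d + 1), t ^ k := by
          refine (norm_sum_le _ _).trans (sum_le_sum fun k hk => ?_)
          rw [norm_mul, norm_pow, mul_pow]
          gcongr
          exact hc k hk
      _ ≤ t ^ 1 / (1 - t) := geom_sum_Ico_le_of_lt_one (by positivity) (by linarith)
      _ = t / (1 - t) := by rw [pow_one]
  have hc₀_le : ‖c 0‖ ≤ t / (1 - t) := by rwa [htail, norm_neg]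
  rw [hc₀, le_div_iff₀ (by linarith)] at hc₀_le
  linarith

theorem esym_zero {n : ℕ} (σ : Fin n → ℝ) : esym σ 0 = 1 := by
  simp [esym]

theorem esym_nonneg {n : ℕ} {σ : Fin n → ℝ} (hσ : ∀ i, 0 ≤ σ i) (k : ℕ) : 0 ≤ esym σ k :=
  sum_nonneg fun _ _ => prod_nonneg fun i _ => hσ i

section gQ

variable {n : ℕ} {σ : Fin n → ℝ} {m : ℕ}

theorem esym_pos_of_gQ_pos (hσ : ∀ i, 0 ≤ σ i) (hg : 0 < gQ n σ m) : 0 < esym σ (n - m) := by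
  -- If `s_{n-m} = 0`, every quotient defining `g_m` is the junk value `x / 0 = 0`, so `g_m ≤ 0`.
  refine (esym_nonneg hσ _).lt_of_ne fun h₀ => hg.not_ge ?_
  have hmn : m ≠ n := by
    rintro rfl
    simp [esym_zero] at h₀
  rw [gQ, if_neg hmn]
  refine Real.sSup_nonpos ?_
  rintro _ ⟨i, hi, rfl⟩
  have him : (0 : ℝ) < i - m := by
    have : (m : ℝ) + 1 ≤ i := by exact_mod_cast hi.1
    linarith
  dsimp only
  rw [← h₀, div_zero, Real.zero_rpow (by positivity)]

theorem esym_div_le_gQ_pow (hσ : ∀ i, 0 ≤ σ i) {k : ℕ} (hk : 1 ≤ k) (hmk : m + k ≤ n) :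
    esym σ (n - (m + k)) / esym σ (n - m) ≤ gQ n σ m ^ k := by
  have hmn : m ≠ n := by omega
  have hroot : (esym σ (n - (m + k)) / esym σ (n - m)) ^ ((k : ℝ)⁻¹) ≤ gQ n σ m := by
    rw [gQ, if_neg hmn]
    refine le_csSup ((Set.finite_Icc _ _).image _).bddAbove ⟨m + k, ⟨by omega, hmk⟩, ?_⟩
    simp only [Nat.cast_add, add_sub_cancel_left, one_div]
  have hx : 0 ≤ esym σ (n - (m + k)) / esym σ (n - m) :=
    div_nonneg (esym_nonneg hσ _) (esym_nonneg hσ _)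
  rw [Real.rpow_inv_le_iff_of_pos hx ((Real.rpow_nonneg hx _).trans hroot) (by positivity),
    Real.rpow_natCast] at hroot
  exact hroot

end gQ

noncomputable def qCoeff {n : ℕ} (σ : Fin n → ℝ) (m k : ℕ) : ℂ :=
  (-1 : ℂ) ^ (n - (m + k)) * ((esym σ (n - (m + k)) / esym σ (n - m) : ℝ) : ℂ)

theorem norm_qCoeff {n : ℕ} {σ : Fin n → ℝ} (hσ : ∀ i, 0 ≤ σ i) (m k : ℕ) :
    ‖qCoeff σ m k‖ = esym σ (n - (m + k)) / esym σ (n - m) := by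
  rw [qCoeff, norm_mul, norm_pow, norm_neg, norm_one, one_pow, one_mul, Complex.norm_real,
    Real.norm_of_nonneg (div_nonneg (esym_nonneg hσ _) (esym_nonneg hσ _))]

theorem qPoly_eq_pow_mul_sum {n : ℕ} (σ : Fin n → ℝ) {m : ℕ} (hm : m ≤ n) (ν : ℂ) :
    qPoly n σ m ν = ν ^ m * ∑ k ∈ range (n - m + 1), qCoeff σ m k * ν ^ k := by
  rw [qPoly, ← Finset.Ico_add_one_right_eq_Icc, sum_Ico_eq_sum_range, mul_sum,
    show n + 1 - m = n - m + 1 by omega]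
  refine sum_congr rfl fun k _ => ?_
  rw [qCoeff, pow_add]
  ring

theorem stmt2_general {n : ℕ}
    (σ : Fin n → ℝ)
    (hσnonneg : ∀ i, 0 ≤ σ i)
    (m : ℕ) (hm₂ : m ≤ n)
    (hg : 0 < gQ n σ m) :
    (∀ ν : ℂ, ν ≠ 0 → qPoly n σ m ν = 0 → 1 / (2 * gQ n σ m) ≤ ‖ν‖) ∧
    (∀ ν ∈ Metric.ball (0 : ℂ) (1 / (2 * gQ n σ m)), qPoly n σ m ν = 0 → ν = 0) := by
  have hs := esym_pos_of_gQ_pos hσnonneg hg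
  have key : ∀ ν : ℂ, ν ≠ 0 → qPoly n σ m ν = 0 → 1 / (2 * gQ n σ m) ≤ ‖ν‖ := by
    intro ν hν hq
    rw [qPoly_eq_pow_mul_sum σ hm₂, mul_eq_zero, or_iff_right (pow_ne_zero _ hν)] at hq
    refine one_div_two_mul_le_norm_of_sum_eq_zero _ hg ?_ (fun k hk => ?_) hq
    · rw [norm_qCoeff hσnonneg, add_zero, div_self hs.ne']
    · rw [mem_Ico] at hk
      rw [norm_qCoeff hσnonneg]
      exact esym_div_le_gQ_pow hσnonneg hk.1 (by omega)
  refine ⟨key, fun ν hν hq => ?_⟩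
  by_contra hν₀
  rw [Metric.mem_ball, dist_zero_right] at hν
  exact (key ν hν₀ hq).not_gt hν

/-- With `q(λ) = Σ_{i=m}^{n} (−1)^{n−i} (s_{n−i}/s_{n−m}) λ^{i}` and
`g_m > 0`, every nonzero complex root `ν` of `q` satisfies `|ν| ≥ 1/(2 g_m)`; in particular
`0` is the only root of `q` in the open ball `B(0, 1/(2 g_m))`. -/
theorem stmt2 {s n : ℕ} (hn : 1 ≤ n) (hsn : n ≤ s)
    (M : Matrix (Fin s) (Fin n) ℂ) (σ : Fin n → ℝ)
    (hσnonneg : ∀ i, 0 ≤ σ i)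
    (hσanti : ∀ i j : Fin n, i ≤ j → σ j ≤ σ i)
    -- `σ` is the family of singular values of `M`:
    (e : Fin n ≃ Fin n)
    (hσsv : ∀ i, σ i =
      Real.sqrt ((Matrix.isHermitian_conjTranspose_mul_self M).eigenvalues (e i)))
    (r : ℕ) (hrank : M.rank = r)
    (m : ℕ) (hm₁ : n - r ≤ m) (hm₂ : m ≤ n)
    (hg : 0 < gQ n σ m) :
    (∀ ν : ℂ, ν ≠ 0 → qPoly n σ m ν = 0 → 1 / (2 * gQ n σ m) ≤ ‖ν‖) ∧
    (∀ ν ∈ Metric.ball (0 : ℂ) (1 / (2 * gQ n σ m)), qPoly n σ m ν = 0 → ν = 0) :=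
  stmt2_general σ hσnonneg m hm₂ hg
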